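/- Let H be an m-hypergraph with edge ideal I. Then (I^∨)^2 has no non-minimal (embedded) associated primes if and only if for every independent set S ⊆ V, the 2-cover A_S is a sum of two 1-covers. -/

import Mathlib

open MvPolynomial Finset

noncomputable section

/-- A `k`-cover of a hypergraph with edge set `E`: a nonzero tuple whose entries
sum to at least `k` over every edge. -/
def IsCover {V : Type*} (E : Finset (Finset V)) (k : ℕ) (a : V → ℕ) : Prop :=
  a ≠ 0 ∧ ∀ e ∈ E, k ≤ ∑ i ∈ e, a i

/-- `a` is a sum of two 1-covers. -/
def SumTwoOneCovers {V : Type*} (E : Finset (Finset V)) (a : V → ℕ) : Prop :=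
  ∃ b c : V → ℕ, IsCover E 1 b ∧ IsCover E 1 c ∧ a = b + c

/-- An independent set: no edge is contained in `S`. -/
def IsIndep {V : Type*} (E : Finset (Finset V)) (S : Finset V) : Prop :=
  ∀ e ∈ E, ¬ e ⊆ S

/-- `i` is in the neighborhood of `S`: `i ∉ S` and some edge consists of `i`
together with vertices of `S`. -/
def InNbhd {V : Type*} (E : Finset (Finset V)) (S : Finset V) (i : V) : Prop :=
  i ∉ S ∧ ∃ e ∈ E, i ∈ e ∧ ∀ j ∈ e, j ≠ i → j ∈ S

open Classical in
/-- The 2-cover `A_S` attached to an independent set `S`: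
`0` on `S`, `2` on `N(S)`, and `1` elsewhere. -/
noncomputable def indepCover {V : Type*} (E : Finset (Finset V)) (S : Finset V) : V → ℕ :=
  fun i => if i ∈ S then 0 else if InNbhd E S i then 2 else 1

/-- The Alexander dual of the edge ideal: `⋂_{edges e} (x_i : i ∈ e)`. -/
noncomputable def dualIdeal {V : Type*} (K : Type*) [Field K] (E : Finset (Finset V)) :
    Ideal (MvPolynomial V K) :=
  ⨅ e ∈ E, Ideal.span (X '' (e : Set V))

/-- The monomial `x_1^{a_1} ⋯ x_n^{a_n}` attached to a tuple `a`. -/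
noncomputable def coverMonomial {V : Type*} [Fintype V] (K : Type*) [Field K] (a : V → ℕ) :
    MvPolynomial V K :=
  ∏ i, X i ^ a i

/-- Connectedness of a hypergraph: any two vertices are linked by a chain of
vertices in which consecutive vertices share an edge. -/
def HConnected {V : Type*} (E : Finset (Finset V)) : Prop :=
  ∀ x y : V, ∃ l : List V, l.head? = some x ∧ l.getLast? = some y ∧
    l.Chain' fun a b => ∃ e ∈ E, a ∈ e ∧ b ∈ e

/-- The cyclic 3-hypergraph with edges `{x_1,x_2,x_3}, {x_3,x_4,x_5}, …`
(0-based: `{2j, 2j+1, 2j+2}` modulo `n`). -/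
def cyc3 (n : ℕ) (hn : 0 < n) : Finset (Finset (Fin n)) :=
  (Finset.range ((n + 1) / 2)).image fun j =>
    ({⟨(2 * j) % n, Nat.mod_lt _ hn⟩, ⟨(2 * j + 1) % n, Nat.mod_lt _ hn⟩,
      ⟨(2 * j + 2) % n, Nat.mod_lt _ hn⟩} : Finset (Fin n))

/-- The alternating tuple: `1` on odd vertices `x_1, x_3, …` (0-based even
indices), `0` on even vertices. -/
def altCover (n : ℕ) : Fin n → ℕ :=
  fun i => if (i : ℕ) % 2 = 0 then 1 else 0

/-!
Write `𝔭_e = (x_i : i ∈ e)` and `J = ⋂_e 𝔭_e`. Substituting `t • x_i` for `x_i`, `i ∈ e`, turns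
membership in `𝔭_e ^ k` into divisibility by `t ^ k`, so `𝔭_e` is prime and `𝔭_e ^ 2` is
`𝔭_e`-primary. Hence `J ^ 2` has no embedded primes iff it equals the symbolic square
`⋂_e 𝔭_e ^ 2`. If it does, every associated prime lies below some `𝔭_e`, so it is one of the
minimal primes `𝔭_e`. Conversely, if all associated primes are minimal and `y ∈ ⋂_e 𝔭_e ^ 2` is
not in `J ^ 2`, the annihilator of `y` modulo `J ^ 2` lies in some `𝔭_e`; yet any
`t ∈ ∏_{e' ≠ e} 𝔭_{e'} \ 𝔭_e` satisfies `t 𝔭_e ⊆ J`, so `t ^ 2` annihilates `y`.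

Both `J ^ 2` and `⋂_e 𝔭_e ^ 2` are monomial ideals, spanned by the monomials of sums of two
1-covers and of 2-covers respectively, so they are equal iff every 2-cover dominates a sum of two
1-covers. Every 2-cover `a` dominates `A_S` for the independent set `S = {a = 0}`, and `A_S` is
itself a 2-cover, so it suffices to decompose the `A_S`.
-/

open scoped Pointwise

theorem Finsupp.exists_le_support_subset_degree_eq_iff {σ : Type*} (a : σ →₀ ℕ) (s : Finset σ)
    (k : ℕ) : (∃ x ≤ a, ↑x.support ⊆ (s : Set σ) ∧ x.degree = k) ↔ k ≤ ∑ i ∈ s, a i := by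
  classical
  constructor
  · rintro ⟨x, hxa, hxs, rfl⟩
    rw [Finsupp.degree_apply, Finset.sum_subset (Finset.coe_subset.mp hxs)
      fun i _ hi => Finsupp.notMem_support_iff.mp hi]
    exact Finset.sum_le_sum fun i _ => hxa i
  · intro hk
    have hsupp : (a.filter (· ∈ s)).support = {i ∈ s | a i ≠ 0} := by
      ext; simp [and_comm]
    have hdeg : (a.filter (· ∈ s)).degree = ∑ i ∈ s, a i := by
      rw [Finsupp.degree_apply, hsupp, ← Finset.sum_filter_ne_zero s]
      exact Finset.sum_congr rfl fun i hi =>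
        Finsupp.filter_apply_pos _ _ (Finset.mem_filter.mp hi).1
    obtain ⟨x, hx, rfl⟩ := Finsupp.exists_le_degree_eq _ k (hdeg ▸ hk)
    refine ⟨x, hx.trans fun i => ?_, fun i hi => ?_, rfl⟩
    · rw [Finsupp.filter_apply]
      split_ifs <;> simp
    · have := Finsupp.support_mono hx hi
      rw [hsupp] at this
      exact (Finset.mem_filter.mp this).1

section Covers

variable {V : Type*} {E : Finset (Finset V)}

/-- Exponent vectors of `k`-covers, without the nonzeroness that `IsCover` demands. -/
def coverExponents (E : Finset (Finset V)) (k : ℕ) : Set (V →₀ ℕ) :=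
  {a | ∀ e ∈ E, k ≤ ∑ i ∈ e, a i}

theorem coverExponents_add_subset (k l : ℕ) :
    coverExponents E k + coverExponents E l ⊆ coverExponents E (k + l) := by
  rintro _ ⟨b, hb, c, hc, rfl⟩ e he
  simpa [Finset.sum_add_distrib] using add_le_add (hb e he) (hc e he)

theorem isCover_of_forall_le_sum (hE : E.Nonempty) {k : ℕ} (hk : k ≠ 0) {a : V → ℕ}
    (ha : ∀ e ∈ E, k ≤ ∑ i ∈ e, a i) : IsCover E k a := by
  refine ⟨fun h0 => ?_, ha⟩
  obtain ⟨e, he⟩ := hE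
  have := ha e he
  simp only [h0, Pi.zero_apply, Finset.sum_const_zero] at this
  omega

theorem sumTwoOneCovers_of_add_le {a b c : V → ℕ} (hb : IsCover E 1 b) (hc : IsCover E 1 c)
    (h : b + c ≤ a) : SumTwoOneCovers E a := by
  have hca : c ≤ a - b := le_tsub_of_add_le_left h
  exact ⟨b, a - b, hb,
    ⟨fun h0 => hc.1 (le_zero_iff.mp (h0 ▸ hca)),
      fun e he => (hc.2 e he).trans (Finset.sum_le_sum fun i _ => hca i)⟩,
    (add_tsub_cancel_of_le (le_self_add.trans h)).symm⟩

theorem two_le_sum_indepCover {S : Finset V} (hS : IsIndep E S) {e : Finset V} (he : e ∈ E) :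
    2 ≤ ∑ i ∈ e, indepCover E S i := by
  classical
  have hpos {i : V} (hiS : i ∉ S) : 1 ≤ indepCover E S i := by
    simp only [indepCover, if_neg hiS]
    split_ifs <;> omega
  obtain ⟨i, hie, hiS⟩ := Finset.not_subset.mp (hS e he)
  by_cases hN : InNbhd E S i
  · calc 2 = indepCover E S i := by simp [indepCover, hiS, hN]
      _ ≤ ∑ i ∈ e, indepCover E S i := Finset.single_le_sum (fun _ _ => Nat.zero_le _) hie
  · obtain ⟨j, hje, hji, hjS⟩ : ∃ j ∈ e, j ≠ i ∧ j ∉ S := by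
      by_contra! h
      exact hN ⟨hiS, e, he, hie, h⟩
    calc 2 ≤ indepCover E S i + indepCover E S j := add_le_add (hpos hiS) (hpos hjS)
      _ = ∑ k ∈ {i, j}, indepCover E S k := (Finset.sum_pair hji.symm).symm
      _ ≤ ∑ k ∈ e, indepCover E S k :=
        Finset.sum_le_sum_of_subset (Finset.insert_subset hie (Finset.singleton_subset_iff.mpr hje))

theorem exists_indepCover_le [Fintype V] {a : V → ℕ} (ha : ∀ e ∈ E, 2 ≤ ∑ i ∈ e, a i) :
    ∃ S, IsIndep E S ∧ indepCover E S ≤ a := by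
  classical
  refine ⟨Finset.univ.filter (a · = 0), fun e he hsub => ?_, fun i => ?_⟩
  · have := ha e he
    rw [Finset.sum_eq_zero fun i hi => (Finset.mem_filter.mp (hsub hi)).2] at this
    omega
  · simp only [indepCover]
    split_ifs with hiS hN
    · exact Nat.zero_le _
    · obtain ⟨-, e, he, hie, hrest⟩ := hN
      have := ha e he
      rwa [Finset.sum_eq_single i (fun j hj hji => (Finset.mem_filter.mp (hrest j hj hji)).2)
        (absurd hie)] at this
    · exact Nat.one_le_iff_ne_zero.mpr fun h => hiS (Finset.mem_filter.mpr ⟨Finset.mem_univ i, h⟩)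

theorem forall_coverExponents_two_iff [Fintype V] (hE : E.Nonempty) :
    (∀ a ∈ coverExponents E 2, ∃ s ∈ coverExponents E 1 + coverExponents E 1, s ≤ a) ↔
      ∀ S, IsIndep E S → SumTwoOneCovers E (indepCover E S) := by
  constructor
  · intro h S hS
    obtain ⟨_, ⟨b, hb, c, hc, rfl⟩, hle⟩ := h (Finsupp.equivFunOnFinite.symm (indepCover E S))
      fun e he => by simpa using two_le_sum_indepCover hS he
    exact sumTwoOneCovers_of_add_le (isCover_of_forall_le_sum hE one_ne_zero hb)
      (isCover_of_forall_le_sum hE one_ne_zero hc) fun i => by simpa using hle i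
  · intro h a ha
    obtain ⟨S, hS, hSa⟩ := exists_indepCover_le (a := ⇑a) ha
    obtain ⟨b, c, hb, hc, hbc⟩ := h S hS
    refine ⟨Finsupp.equivFunOnFinite.symm b + Finsupp.equivFunOnFinite.symm c,
      Set.add_mem_add (fun e he => by simpa using hb.2 e he) (fun e he => by simpa using hc.2 e he),
      fun i => ?_⟩
    simpa [hbc] using hSa i

end Covers

namespace Ideal

theorem isPrimary_span_singleton_pow {R : Type*} [CommSemiring R] [IsCancelMulZero R]
    {p : R} (hp : Prime p) {k : ℕ} (hk : k ≠ 0) : (span {p ^ k}).IsPrimary := by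
  rw [isPrimary_iff, Ne, span_singleton_eq_top, isUnit_pow_iff hk]
  refine ⟨hp.not_isUnit, fun {x y} hxy => or_iff_not_imp_right.mpr fun hy => ?_⟩
  rw [mem_span_singleton] at hxy ⊢
  exact hp.pow_dvd_of_dvd_mul_right k
    (fun hpy => hy ⟨k, mem_span_singleton.mpr (pow_dvd_pow_of_dvd hpy k)⟩) hxy

theorem exists_le_radical_of_isAssociatedPrime {R ι : Type*} [CommRing R] {s : Finset ι}
    {Q : ι → Ideal R} (hQ : ∀ i ∈ s, (Q i).IsPrimary) {P : Ideal R}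
    (hP : IsAssociatedPrime P (R ⧸ ⨅ i ∈ s, Q i)) : ∃ i ∈ s, P ≤ (Q i).radical := by
  obtain ⟨hPp, x, rfl⟩ := hP
  obtain ⟨z, rfl⟩ := Quotient.mk_surjective x
  have hcolon {w : R} : w ∈ (⊥ : Submodule R (R ⧸ ⨅ i ∈ s, Q i)).colon {Quotient.mk _ z} ↔
      w * z ∈ ⨅ i ∈ s, Q i := by
    rw [Submodule.mem_colon_singleton, Algebra.smul_def, Quotient.algebraMap_eq, ← map_mul,
      Submodule.mem_bot, Quotient.eq_zero_iff_mem]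
  obtain ⟨i, hi, hzi⟩ : ∃ i ∈ s, z ∉ Q i := by
    by_contra! h
    refine hPp.ne_top (radical_eq_top.mpr ?_)
    rw [eq_top_iff_one, hcolon, one_mul]
    exact mem_iInf.mpr fun i => mem_iInf.mpr (h i)
  refine ⟨i, hi, radical_le_radical_iff.mpr fun w hw => ?_⟩
  have hzw : z * w ∈ Q i := mul_comm w z ▸ mem_iInf.mp (mem_iInf.mp (hcolon.mp hw) i) hi
  exact ((isPrimary_iff.mp (hQ i hi)).2 hzw).resolve_left hzi

end Ideal

namespace MvPolynomial

variable {σ R : Type*}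

section CommSemiring

variable [CommSemiring R]

theorem span_X_image_pow_eq_span_monomial (s : Finset σ) (k : ℕ) :
    Ideal.span (X '' (s : Set σ)) ^ k =
      Ideal.span ((monomial · (1 : R)) '' {x | x.degree = k ∧ ↑x.support ⊆ (s : Set σ)}) := by
  rw [Ideal.span, Submodule.span_pow, Finsupp.image_pow_eq_finsuppProd_image]
  simp [monomial_eq]

theorem mem_span_X_image_pow_iff {s : Finset σ} {k : ℕ} {f : MvPolynomial σ R} :
    f ∈ Ideal.span (X '' (s : Set σ)) ^ k ↔ ∀ a ∈ f.support, k ≤ ∑ i ∈ s, a i := by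
  rw [span_X_image_pow_eq_span_monomial, mem_ideal_span_monomial_image]
  refine forall₂_congr fun a _ => ?_
  rw [← Finsupp.exists_le_support_subset_degree_eq_iff]
  exact ⟨fun ⟨x, ⟨hdeg, hs⟩, hle⟩ => ⟨x, hle, hs, hdeg⟩,
    fun ⟨x, hle, hs, hdeg⟩ => ⟨x, ⟨hdeg, hs⟩, hle⟩⟩

variable [Nontrivial R]

theorem span_monomial_image_le_span_monomial_image_iff {A B : Set (σ →₀ ℕ)} :
    Ideal.span ((monomial · (1 : R)) '' A) ≤ Ideal.span ((monomial · (1 : R)) '' B) ↔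
      ∀ a ∈ A, ∃ b ∈ B, b ≤ a := by
  classical
  rw [Ideal.span_le, Set.image_subset_iff]
  refine forall₂_congr fun a _ => ?_
  rw [Set.mem_preimage, SetLike.mem_coe, mem_ideal_span_monomial_image, support_monomial,
    if_neg one_ne_zero]
  simp only [Finset.mem_singleton, forall_eq]

theorem X_mem_span_X_image_iff {s : Set σ} {j : σ} :
    (X j : MvPolynomial σ R) ∈ Ideal.span (X '' s) ↔ j ∈ s := by
  simp [mem_ideal_span_X_image, support_X, Finsupp.single_apply_ne_zero]

theorem span_X_image_le_span_X_image_iff {s t : Set σ} :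
    Ideal.span (X '' s : Set (MvPolynomial σ R)) ≤ Ideal.span (X '' t) ↔ s ⊆ t := by
  simp [Ideal.span_le, Set.subset_def, X_mem_span_X_image_iff]

end CommSemiring

section ScaleVars

variable [CommSemiring R] [DecidableEq σ]

/-- The substitution `x_i ↦ t • x_i` for `i ∈ s`: the coefficient of `t ^ d` in `scaleVars s f`
is the part of `f` of degree `d` in the variables from `s`. -/
def scaleVars (s : Finset σ) : MvPolynomial σ R →ₐ[R] Polynomial (MvPolynomial σ R) :=
  aeval fun i => Polynomial.C (X i) * Polynomial.X ^ (if i ∈ s then 1 else 0)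

theorem scaleVars_monomial (s : Finset σ) (a : σ →₀ ℕ) (r : R) :
    scaleVars s (monomial a r) = Polynomial.C (monomial a r) * Polynomial.X ^ ∑ i ∈ s, a i := by
  rw [scaleVars, aeval_monomial, monomial_eq, Finsupp.prod]
  simp_rw [mul_pow, ← pow_mul, Finset.prod_mul_distrib, Finset.prod_pow_eq_pow_sum]
  have hdeg : ∑ i ∈ a.support, (if i ∈ s then 1 else 0) * a i = ∑ i ∈ s, a i := by
    simp_rw [boole_mul, Finset.sum_ite_mem]
    exact Finset.sum_subset Finset.inter_subset_right fun i his hi =>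
      Finsupp.notMem_support_iff.mp fun h => hi (Finset.mem_inter.mpr ⟨h, his⟩)
  rw [hdeg, Finsupp.prod, map_mul, map_prod, Polynomial.algebraMap_apply, algebraMap_eq]
  simp only [map_pow, mul_assoc]

theorem coeff_coeff_scaleVars (s : Finset σ) (f : MvPolynomial σ R) (d : ℕ) (a : σ →₀ ℕ) :
    ((scaleVars s f).coeff d).coeff a = if ∑ i ∈ s, a i = d then f.coeff a else 0 := by
  induction f using induction_on' with
  | monomial b r =>
    rw [scaleVars_monomial, Polynomial.coeff_C_mul_X_pow, coeff_monomial]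
    obtain rfl | hba := eq_or_ne b a
    · split_ifs <;> simp_all [eq_comm]
    · split_ifs <;> simp [coeff_monomial, hba]
  | add p q hp hq =>
    simp only [map_add, Polynomial.coeff_add, coeff_add, hp, hq]
    split_ifs <;> simp

theorem X_pow_dvd_scaleVars_iff {s : Finset σ} {k : ℕ} {f : MvPolynomial σ R} :
    Polynomial.X ^ k ∣ scaleVars s f ↔ ∀ a ∈ f.support, k ≤ ∑ i ∈ s, a i := by
  simp_rw [Polynomial.X_pow_dvd_iff, MvPolynomial.ext_iff, coeff_coeff_scaleVars, coeff_zero,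
    mem_support_iff]
  refine ⟨fun h a ha => ?_, fun h d hd a => ?_⟩
  · by_contra! hlt
    exact ha (by simpa using h _ hlt a)
  · split_ifs with had
    · by_contra hne
      exact absurd (h a hne) (by omega)
    · rfl

theorem span_X_image_pow_eq_comap (s : Finset σ) (k : ℕ) :
    Ideal.span (X '' (s : Set σ)) ^ k =
      (Ideal.span {(Polynomial.X : Polynomial (MvPolynomial σ R)) ^ k}).comap (scaleVars s) := by
  ext f
  rw [Ideal.mem_comap, Ideal.mem_span_singleton, X_pow_dvd_scaleVars_iff, mem_span_X_image_pow_iff]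

end ScaleVars

section IsDomain

variable [CommRing R] [IsDomain R]

theorem isPrime_span_X_image (s : Finset σ) :
    (Ideal.span (X '' (s : Set σ)) : Ideal (MvPolynomial σ R)).IsPrime := by
  classical
  have := (Ideal.span_singleton_prime (Polynomial.X_ne_zero (R := MvPolynomial σ R))).mpr
    Polynomial.prime_X
  have h := span_X_image_pow_eq_comap (R := R) s 1
  rw [pow_one, pow_one] at h
  rw [h]
  exact Ideal.comap_isPrime _ _

theorem isPrimary_span_X_image_pow (s : Finset σ) {k : ℕ} (hk : k ≠ 0) :
    (Ideal.span (X '' (s : Set σ)) ^ k : Ideal (MvPolynomial σ R)).IsPrimary := by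
  classical
  rw [span_X_image_pow_eq_comap]
  exact (Ideal.isPrimary_span_singleton_pow Polynomial.prime_X hk).comap _

end IsDomain

section DualIdeal

variable {V K : Type*} [Field K] (E : Finset (Finset V))

theorem dualIdeal_le_span_X_image {e : Finset V} (he : e ∈ E) :
    dualIdeal K E ≤ Ideal.span (X '' (e : Set V)) :=
  iInf₂_le e he

theorem exists_span_X_image_le_of_isPrime {P : Ideal (MvPolynomial V K)} (hP : P.IsPrime)
    (h : dualIdeal K E ^ 2 ≤ P) : ∃ e ∈ E, Ideal.span (X '' (e : Set V)) ≤ P := by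
  rw [hP.pow_le_iff two_ne_zero, dualIdeal, ← Finset.inf_eq_iInf] at h
  exact hP.inf_le'.mp h

theorem iInf_span_X_image_pow_eq_span (k : ℕ) :
    ⨅ e ∈ E, Ideal.span (X '' (e : Set V)) ^ k =
      Ideal.span ((monomial · (1 : K)) '' coverExponents E k) := by
  ext f
  simp only [Ideal.mem_iInf, mem_span_X_image_pow_iff, mem_ideal_span_monomial_image]
  constructor
  · exact fun h a ha => ⟨a, fun e he => h e he a ha, le_rfl⟩
  · rintro h e he a ha
    obtain ⟨b, hb, hba⟩ := h a ha
    exact (hb e he).trans (Finset.sum_le_sum fun i _ => hba i)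

theorem dualIdeal_sq_eq_span :
    dualIdeal K E ^ 2 =
      Ideal.span ((monomial · (1 : K)) '' (coverExponents E 1 + coverExponents E 1)) := by
  have h1 : dualIdeal K E = Ideal.span ((monomial · (1 : K)) '' coverExponents E 1) := by
    simpa [dualIdeal] using iInf_span_X_image_pow_eq_span (K := K) E 1
  rw [sq, h1, Ideal.span_mul_span', ← Set.image2_mul, ← Set.image2_add, Set.image_image2,
    Set.image2_image_left, Set.image2_image_right]
  simp_rw [monomial_mul, one_mul]

theorem dualIdeal_sq_eq_iInf_iff :
    dualIdeal K E ^ 2 = ⨅ e ∈ E, Ideal.span (X '' (e : Set V)) ^ 2 ↔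
      ∀ a ∈ coverExponents E 2, ∃ s ∈ coverExponents E 1 + coverExponents E 1, s ≤ a := by
  rw [dualIdeal_sq_eq_span, iInf_span_X_image_pow_eq_span, le_antisymm_iff,
    span_monomial_image_le_span_monomial_image_iff, span_monomial_image_le_span_monomial_image_iff]
  exact and_iff_right fun s hs => ⟨s, coverExponents_add_subset 1 1 hs, le_rfl⟩

variable {E}

theorem minimalPrimes_dualIdeal_sq (hE : IsAntichain (· ⊆ ·) (E : Set (Finset V))) :
    (dualIdeal K E ^ 2).minimalPrimes =
      (fun e : Finset V => Ideal.span (X '' (e : Set V))) '' (E : Set (Finset V)) := by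
  have hle {e : Finset V} (he : e ∈ E) : dualIdeal K E ^ 2 ≤ Ideal.span (X '' (e : Set V)) :=
    (Ideal.pow_le_self two_ne_zero).trans (dualIdeal_le_span_X_image E he)
  ext P
  constructor
  · rintro ⟨⟨hPp, hJP⟩, hmin⟩
    obtain ⟨e, he, heP⟩ := exists_span_X_image_le_of_isPrime E hPp hJP
    exact ⟨e, he, le_antisymm heP (hmin ⟨isPrime_span_X_image e, hle he⟩ heP)⟩
  · rintro ⟨e, he, rfl⟩
    refine ⟨⟨isPrime_span_X_image e, hle he⟩, fun Q ⟨hQp, hJQ⟩ hQe => ?_⟩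
    obtain ⟨e', he', he'Q⟩ := exists_span_X_image_le_of_isPrime E hQp hJQ
    have he'e : e' ⊆ e :=
      Finset.coe_subset.mp (span_X_image_le_span_X_image_iff.mp (he'Q.trans hQe))
    exact hE.eq he' he he'e ▸ he'Q

theorem exists_span_singleton_mul_le_dualIdeal (hE : IsAntichain (· ⊆ ·) (E : Set (Finset V)))
    {e : Finset V} (he : e ∈ E) :
    ∃ t ∉ Ideal.span (X '' (e : Set V)),
      Ideal.span {t} * Ideal.span (X '' (e : Set V)) ≤ dualIdeal K E := by
  classical
  have hprod : ¬ ∏ e' ∈ E.erase e, Ideal.span (X '' (e' : Set V)) ≤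
      (Ideal.span (X '' (e : Set V)) : Ideal (MvPolynomial V K)) := by
    rw [(isPrime_span_X_image e).prod_le]
    rintro ⟨e', he', hle⟩
    exact (Finset.mem_erase.mp he').1 (hE.eq (Finset.mem_of_mem_erase he') he
      (Finset.coe_subset.mp (span_X_image_le_span_X_image_iff.mp hle)))
  obtain ⟨t, ht, hte⟩ := SetLike.not_le_iff_exists.mp hprod
  refine ⟨t, hte, Ideal.span_singleton_mul_le_iff.mpr fun p hp => ?_⟩
  refine Ideal.mem_iInf.mpr fun e' => Ideal.mem_iInf.mpr fun he' => ?_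
  by_cases hee' : e' = e
  · exact hee' ▸ Ideal.mul_mem_left _ t hp
  · exact Ideal.mul_mem_right p _
      (Finset.inf_le (f := fun e' : Finset V => Ideal.span (X '' (e' : Set V)))
        (Finset.mem_erase.mpr ⟨hee', he'⟩) (Ideal.prod_le_inf ht))

theorem iInf_span_X_image_sq_le_dualIdeal_sq [Finite V]
    (hE : IsAntichain (· ⊆ ·) (E : Set (Finset V)))
    (h : ∀ P, IsAssociatedPrime P (MvPolynomial V K ⧸ dualIdeal K E ^ 2) →
      P ∈ (dualIdeal K E ^ 2).minimalPrimes) :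
    ⨅ e ∈ E, Ideal.span (X '' (e : Set V)) ^ 2 ≤ dualIdeal K E ^ 2 := by
  intro y hy
  by_contra hyJ
  obtain ⟨P, hP, hann⟩ := exists_le_isAssociatedPrime_of_isNoetherianRing (MvPolynomial V K)
    (Ideal.Quotient.mk (dualIdeal K E ^ 2) y) (by rwa [Ne, Ideal.Quotient.eq_zero_iff_mem])
  have hPmin := h P hP
  rw [minimalPrimes_dualIdeal_sq hE] at hPmin
  obtain ⟨e, he, rfl⟩ := hPmin
  obtain ⟨t, hte, htJ⟩ := exists_span_singleton_mul_le_dualIdeal (K := K) hE he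
  have ht2y : t ^ 2 * y ∈ dualIdeal K E ^ 2 := by
    refine Ideal.pow_right_mono htJ 2 ?_
    rw [mul_pow, Ideal.span_singleton_pow]
    exact Ideal.mul_mem_mul (Ideal.mem_span_singleton_self _)
      (Ideal.mem_iInf.mp (Ideal.mem_iInf.mp hy e) he)
  refine hte ((isPrime_span_X_image e).mem_of_pow_mem 2 (hann ?_))
  rwa [Submodule.mem_colon_singleton, Algebra.smul_def, Ideal.Quotient.algebraMap_eq, ← map_mul,
    Submodule.mem_bot, Ideal.Quotient.eq_zero_iff_mem]

theorem mem_minimalPrimes_of_isAssociatedPrime (hE : IsAntichain (· ⊆ ·) (E : Set (Finset V)))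
    (h : dualIdeal K E ^ 2 = ⨅ e ∈ E, Ideal.span (X '' (e : Set V)) ^ 2)
    {P : Ideal (MvPolynomial V K)}
    (hP : IsAssociatedPrime P (MvPolynomial V K ⧸ dualIdeal K E ^ 2)) :
    P ∈ (dualIdeal K E ^ 2).minimalPrimes := by
  have hJP : dualIdeal K E ^ 2 ≤ P := by
    simpa [Submodule.annihilator_top, Ideal.annihilator_quotient] using hP.annihilator_le
  obtain ⟨e, he, heP⟩ := exists_span_X_image_le_of_isPrime E hP.isPrime hJP
  rw [h] at hP
  obtain ⟨e', he', hPe'⟩ := Ideal.exists_le_radical_of_isAssociatedPrime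
    (fun e _ => isPrimary_span_X_image_pow e two_ne_zero) hP
  rw [Ideal.radical_pow _ two_ne_zero, (isPrime_span_X_image e').radical] at hPe'
  have hee' : e = e' := hE.eq he he'
    (Finset.coe_subset.mp (span_X_image_le_span_X_image_iff.mp (heP.trans hPe')))
  rw [minimalPrimes_dualIdeal_sq hE]
  exact ⟨e, he, le_antisymm heP (hee' ▸ hPe')⟩

theorem forall_isAssociatedPrime_mem_minimalPrimes_iff [Finite V]
    (hE : IsAntichain (· ⊆ ·) (E : Set (Finset V))) :
    (∀ P, IsAssociatedPrime P (MvPolynomial V K ⧸ dualIdeal K E ^ 2) →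
      P ∈ (dualIdeal K E ^ 2).minimalPrimes) ↔
      dualIdeal K E ^ 2 = ⨅ e ∈ E, Ideal.span (X '' (e : Set V)) ^ 2 :=
  ⟨fun h => le_antisymm
    (le_iInf₂ fun _ he => Ideal.pow_right_mono (dualIdeal_le_span_X_image E he) 2)
    (iInf_span_X_image_sq_le_dualIdeal_sq hE h),
   fun h _ => mem_minimalPrimes_of_isAssociatedPrime hE h⟩

end DualIdeal

end MvPolynomial

theorem stmt4 {K : Type*} [Field K] {n m : ℕ} (E : Finset (Finset (Fin n)))
    (hE : E.Nonempty) (hm : ∀ e ∈ E, e.card = m) :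
    (∀ P : Ideal (MvPolynomial (Fin n) K),
        IsAssociatedPrime P (MvPolynomial (Fin n) K ⧸ ((dualIdeal K E) ^ 2)) →
          P ∈ ((dualIdeal K E) ^ 2).minimalPrimes) ↔
      (∀ S : Finset (Fin n), IsIndep E S → SumTwoOneCovers E (indepCover E S)) := by
  rw [MvPolynomial.forall_isAssociatedPrime_mem_minimalPrimes_iff
      (Set.Sized.isAntichain fun e he => hm e he),
    MvPolynomial.dualIdeal_sq_eq_iInf_iff, forall_coverExponents_two_iff hE]
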